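/- arXiv:1804.10540 — 12 statements merged into one kernel-verified Lean document; each statement's English description precedes it below -/
import Mathlib

section
/- In any imploid, the law of double-negation introduction (a ≤ (a ⊸ b) ⊸ b for all a, b) implies the law of exchange (a ⊸ (b ⊸ c) ≤ b ⊸ (a ⊸ c) for all a, b, c). -/
theorem stmt0_general {P : Type*} [Preorder P] (imp : P → P → P)
    (himp : ∀ ⦃a₁ a₂ b₁ b₂ : P⦄, a₂ ≤ a₁ → b₁ ≤ b₂ → imp a₁ b₁ ≤ imp a₂ b₂)
    (hcomp : ∀ a b c : P, imp b c ≤ imp (imp a b) (imp a c))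
    (hdni : ∀ a b : P, a ≤ imp (imp a b) b) :
    ∀ a b c : P, imp a (imp b c) ≤ imp b (imp a c) := by
  intro a b c
  calc imp a (imp b c)
      ≤ imp (imp (imp a (imp b c)) (imp a c)) (imp a c) := hdni _ _
    _ ≤ imp (imp (imp b c) c) (imp a c) := himp (hcomp a (imp b c) c) le_rfl
    _ ≤ imp b (imp a c) := himp (hdni b c) le_rfl

theorem stmt0 {P : Type*} [Preorder P] (imp : P → P → P) (I : P)
    (himp : ∀ ⦃a₁ a₂ b₁ b₂ : P⦄, a₂ ≤ a₁ → b₁ ≤ b₂ → imp a₁ b₁ ≤ imp a₂ b₂)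
    (hcomp : ∀ a b c : P, imp b c ≤ imp (imp a b) (imp a c))
    (hid : ∀ a : P, I ≤ imp a a)
    (hunit : ∀ a : P, imp I a ≤ a)
    (hdni : ∀ a b : P, a ≤ imp (imp a b) b) :
    ∀ a b c : P, imp a (imp b c) ≤ imp b (imp a c) :=
  stmt0_general imp himp hcomp hdni
end

section
/- In any left normal imploid, the law of exchange (a ⊸ (b ⊸ c) ≤ b ⊸ (a ⊸ c) for all a, b, c) implies the law of double-negation introduction (a ≤ (a ⊸ b) ⊸ b for all a, b). -/
theorem stmt1_general {P : Type*} [Preorder P] (imp : P → P → P) (I : P)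
    (hid : ∀ a : P, I ≤ imp a a)
    (hln : ∀ a b : P, I ≤ imp a b → a ≤ b)
    (hexch : ∀ a b c : P, imp a (imp b c) ≤ imp b (imp a c)) :
    ∀ a b : P, a ≤ imp (imp a b) b :=
  fun a b => hln _ _ <|
    calc I ≤ imp (imp a b) (imp a b) := hid (imp a b)
      _ ≤ imp a (imp (imp a b) b) := hexch (imp a b) a b

theorem stmt1 {P : Type*} [Preorder P] (imp : P → P → P) (I : P)
    (himp : ∀ ⦃a₁ a₂ b₁ b₂ : P⦄, a₂ ≤ a₁ → b₁ ≤ b₂ → imp a₁ b₁ ≤ imp a₂ b₂)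
    (hcomp : ∀ a b c : P, imp b c ≤ imp (imp a b) (imp a c))
    (hid : ∀ a : P, I ≤ imp a a)
    (hunit : ∀ a : P, imp I a ≤ a)
    (hln : ∀ a b : P, I ≤ imp a b → a ≤ b)
    (hexch : ∀ a b c : P, imp a (imp b c) ≤ imp b (imp a c)) :
    ∀ a b : P, a ≤ imp (imp a b) b :=
  stmt1_general imp I hid hln hexch
end

section
/- Let P be an imploid. On the set of upward-closed subsets of P ordered by reverse inclusion, define R ⊗ S := {p | ∃ q, (q ⊸ p) ∈ R ∧ q ∈ S} and unit Î := {p | I ≤ p}. Then this forms a skew monoid: (R ⊗ S) ⊗ T ⊇ R ⊗ (S ⊗ T), Î ⊗ R ⊇ R, and R ⊇ R ⊗ Î, and ⊗ is covariant in both arguments with respect to reverse inclusion. -/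
def UpClosed {P : Type*} [Preorder P] (R : Set P) : Prop :=
  ∀ ⦃a b : P⦄, a ∈ R → a ≤ b → b ∈ R

def tensor {P : Type*} (imp : P → P → P) (R S : Set P) : Set P :=
  {p | ∃ q, imp q p ∈ R ∧ q ∈ S}

theorem tensor_mono {P : Type*} (imp : P → P → P) {R₁ R₂ S₁ S₂ : Set P}
    (hR : R₂ ⊆ R₁) (hS : S₂ ⊆ S₁) : tensor imp R₂ S₂ ⊆ tensor imp R₁ S₁ :=
  fun _ ⟨q, hqp, hq⟩ => ⟨q, hR hqp, hS hq⟩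

section Preorder

variable {P : Type*} [Preorder P] (imp : P → P → P)

theorem tensor_tensor_subset_tensor_tensor
    (hcomp : ∀ a b c : P, imp b c ≤ imp (imp a b) (imp a c))
    {R : Set P} (hR : UpClosed R) (S T : Set P) :
    tensor imp R (tensor imp S T) ⊆ tensor imp (tensor imp R S) T := by
  rintro p ⟨q, hqp, r, hrq, hr⟩
  exact ⟨r, ⟨imp r q, hR hqp (hcomp r q p), hrq⟩, hr⟩

theorem subset_tensor_unit_left {I : P} (hid : ∀ a : P, I ≤ imp a a) (R : Set P) :
    R ⊆ tensor imp {p | I ≤ p} R :=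
  fun p hp => ⟨p, hid p, hp⟩

theorem tensor_unit_right_subset {I : P}
    (hanti : ∀ ⦃a₁ a₂ b : P⦄, a₂ ≤ a₁ → imp a₁ b ≤ imp a₂ b)
    (hunit : ∀ a : P, imp I a ≤ a) {R : Set P} (hR : UpClosed R) :
    tensor imp R {p | I ≤ p} ⊆ R := by
  rintro p ⟨q, hqp, hq⟩
  exact hR hqp ((hanti hq).trans (hunit p))

end Preorder

theorem stmt4 {P : Type*} [Preorder P] (imp : P → P → P) (I : P)
    (himp : ∀ ⦃a₁ a₂ b₁ b₂ : P⦄, a₂ ≤ a₁ → b₁ ≤ b₂ → imp a₁ b₁ ≤ imp a₂ b₂)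
    (hcomp : ∀ a b c : P, imp b c ≤ imp (imp a b) (imp a c))
    (hid : ∀ a : P, I ≤ imp a a)
    (hunit : ∀ a : P, imp I a ≤ a) :
    (∀ R S T : Set P, UpClosed R → UpClosed S → UpClosed T →
      tensor imp R (tensor imp S T) ⊆ tensor imp (tensor imp R S) T) ∧
    (∀ R : Set P, UpClosed R → R ⊆ tensor imp {p | I ≤ p} R) ∧
    (∀ R : Set P, UpClosed R → tensor imp R {p | I ≤ p} ⊆ R) ∧
    (∀ R₁ R₂ S₁ S₂ : Set P, R₂ ⊆ R₁ → S₂ ⊆ S₁ →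
      tensor imp R₂ S₂ ⊆ tensor imp R₁ S₁) :=
  ⟨fun _ S T hR _ _ => tensor_tensor_subset_tensor_tensor imp hcomp hR S T,
    fun R _ => subset_tensor_unit_left imp hid R,
    fun _ hR => tensor_unit_right_subset imp (fun _ _ _ h => himp h le_rfl) hunit hR,
    fun _ _ _ _ hR hS => tensor_mono imp hR hS⟩
end

section
/- Let P be an imploid. P satisfies double-negation introduction (a ≤ (a ⊸ b) ⊸ b for all a, b) if and only if R ⊗ S ⊇ S ⊗ R for all upward-closed subsets R, S of P, where R ⊗ S := {p | ∃ q, (q ⊸ p) ∈ R ∧ q ∈ S}. -/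
open Set

section Imploid

variable {P : Type*} [Preorder P] {imp : P → P → P}

lemma upClosed_Ici (a : P) : UpClosed (Ici a) :=
  fun _ _ hx hxy => le_trans hx hxy

lemma tensor_swap_subset_of_le_imp_imp (hdni : ∀ a b : P, a ≤ imp (imp a b) b)
    {R : Set P} (hR : UpClosed R) (S : Set P) : tensor imp S R ⊆ tensor imp R S := by
  rintro p ⟨q, hqp, hq⟩
  exact ⟨imp q p, hR hq (hdni q p), hqp⟩

lemma mem_tensor_Ici_imp_Ici (a b : P) : b ∈ tensor imp (Ici (imp a b)) (Ici a) :=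
  ⟨a, le_rfl, le_rfl⟩

lemma le_imp_imp_of_tensor_swap_subset (himp : ∀ a₁ a₂ b : P, a₂ ≤ a₁ → imp a₁ b ≤ imp a₂ b)
    {a b : P} (h : tensor imp (Ici (imp a b)) (Ici a) ⊆ tensor imp (Ici a) (Ici (imp a b))) :
    a ≤ imp (imp a b) b := by
  obtain ⟨q, ha, hq⟩ := h (mem_tensor_Ici_imp_Ici a b)
  exact le_trans ha (himp _ _ b hq)

end Imploid

theorem stmt5_general {P : Type*} [Preorder P] (imp : P → P → P)
    (himp : ∀ ⦃a₁ a₂ b₁ b₂ : P⦄, a₂ ≤ a₁ → b₁ ≤ b₂ → imp a₁ b₁ ≤ imp a₂ b₂) :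
    (∀ a b : P, a ≤ imp (imp a b) b) ↔
    (∀ R S : Set P, UpClosed R → UpClosed S →
      tensor imp S R ⊆ tensor imp R S) := by
  refine ⟨fun hdni R S hR _ => tensor_swap_subset_of_le_imp_imp hdni hR S, fun h a b => ?_⟩
  exact le_imp_imp_of_tensor_swap_subset (imp := imp) (fun _ _ _ hle => himp hle le_rfl)
    (h _ _ (upClosed_Ici a) (upClosed_Ici (imp a b)))

theorem stmt5 {P : Type*} [Preorder P] (imp : P → P → P) (I : P)
    (himp : ∀ ⦃a₁ a₂ b₁ b₂ : P⦄, a₂ ≤ a₁ → b₁ ≤ b₂ → imp a₁ b₁ ≤ imp a₂ b₂)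
    (hcomp : ∀ a b c : P, imp b c ≤ imp (imp a b) (imp a c))
    (hid : ∀ a : P, I ≤ imp a a)
    (hunit : ∀ a : P, imp I a ≤ a) :
    (∀ a b : P, a ≤ imp (imp a b) b) ↔
    (∀ R S : Set P, UpClosed R → UpClosed S →
      tensor imp S R ⊆ tensor imp R S) :=
  stmt5_general imp himp
end

section
/- Let P be an imploid. P satisfies exchange (a ⊸ (b ⊸ c) ≤ b ⊸ (a ⊸ c) for all a, b, c) if and only if (R ⊗ S) ⊗ T ⊇ (R ⊗ T) ⊗ S for all upward-closed subsets R, S, T of P, where R ⊗ S := {p | ∃ q, (q ⊸ p) ∈ R ∧ q ∈ S}. -/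
/-!
If `⊸` satisfies exchange, `p ∈ (R ⊗ T) ⊗ S` is witnessed by `r ∈ T`, `q ∈ S` with
`r ⊸ (q ⊸ p) ∈ R`, and exchange moves this into `R` as `q ⊸ (r ⊸ p)`. Conversely, on principal up-sets
`↑x = Ici x` the tensor computes implications: `c ∈ (↑x ⊗ ↑a) ⊗ ↑b ↔ x ≤ a ⊸ (b ⊸ c)`, so the
inclusion for `x = a ⊸ (b ⊸ c)` is exactly the exchange inequality.
-/

theorem IsUpperSet.upClosed {P : Type*} [Preorder P] {R : Set P} (hR : IsUpperSet R) :
    UpClosed R :=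
  fun _ _ ha hab => hR hab ha

theorem tensor_Ici {P : Type*} [Preorder P] {imp : P → P → P}
    (hanti : ∀ p, Antitone (imp · p)) {R : Set P} (hR : IsUpperSet R) (a : P) :
    tensor imp R (Set.Ici a) = imp a ⁻¹' R := by
  ext p
  constructor
  · rintro ⟨q, hqp, haq⟩
    exact hR (hanti p haq) hqp
  · exact fun hap => ⟨a, hap, le_rfl⟩

theorem tensor_tensor_Ici {P : Type*} [Preorder P] {imp : P → P → P}
    (hanti : ∀ p, Antitone (imp · p)) (hmono : ∀ q, Monotone (imp q)) (x a b : P) :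
    tensor imp (tensor imp (Set.Ici x) (Set.Ici a)) (Set.Ici b) = {c | x ≤ imp a (imp b c)} := by
  rw [tensor_Ici hanti (isUpperSet_Ici x), tensor_Ici hanti ((isUpperSet_Ici x).preimage (hmono a))]
  rfl

theorem tensor_tensor_subset_of_exchange {P : Type*} [Preorder P] {imp : P → P → P}
    (hex : ∀ a b c : P, imp a (imp b c) ≤ imp b (imp a c)) {R : Set P} (hR : UpClosed R)
    (S T : Set P) : tensor imp (tensor imp R T) S ⊆ tensor imp (tensor imp R S) T := by
  rintro p ⟨q, ⟨r, hrR, hrT⟩, hqS⟩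
  exact ⟨r, ⟨q, hR hrR (hex r q p), hqS⟩, hrT⟩

theorem stmt6_general {P : Type*} [Preorder P] (imp : P → P → P)
    (himp : ∀ ⦃a₁ a₂ b₁ b₂ : P⦄, a₂ ≤ a₁ → b₁ ≤ b₂ → imp a₁ b₁ ≤ imp a₂ b₂) :
    (∀ a b c : P, imp a (imp b c) ≤ imp b (imp a c)) ↔
    (∀ R S T : Set P, UpClosed R → UpClosed S → UpClosed T →
      tensor imp (tensor imp R T) S ⊆ tensor imp (tensor imp R S) T) := by
  refine ⟨fun hex R S T hR _ _ => tensor_tensor_subset_of_exchange hex hR S T, fun h a b c => ?_⟩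
  have hanti : ∀ p, Antitone (imp · p) := fun _ _ _ hq => himp hq le_rfl
  have hmono : ∀ q, Monotone (imp q) := fun _ _ _ hp => himp le_rfl hp
  have hsub := h (Set.Ici (imp a (imp b c))) (Set.Ici b) (Set.Ici a) (isUpperSet_Ici _).upClosed
    (isUpperSet_Ici b).upClosed (isUpperSet_Ici a).upClosed
  rw [tensor_tensor_Ici hanti hmono, tensor_tensor_Ici hanti hmono] at hsub
  exact hsub (le_refl (imp a (imp b c)))

theorem stmt6 {P : Type*} [Preorder P] (imp : P → P → P) (I : P)
    (himp : ∀ ⦃a₁ a₂ b₁ b₂ : P⦄, a₂ ≤ a₁ → b₁ ≤ b₂ → imp a₁ b₁ ≤ imp a₂ b₂)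
    (hcomp : ∀ a b c : P, imp b c ≤ imp (imp a b) (imp a c))
    (hid : ∀ a : P, I ≤ imp a a)
    (hunit : ∀ a : P, imp I a ≤ a) :
    (∀ a b c : P, imp a (imp b c) ≤ imp b (imp a c)) ↔
    (∀ R S T : Set P, UpClosed R → UpClosed S → UpClosed T →
      tensor imp (tensor imp R T) S ⊆ tensor imp (tensor imp R S) T) :=
  stmt6_general imp himp
end

section
/- Let M be a skew monoid. On the set of downward-closed subsets of M ordered by inclusion, define K ⊸ L := {m | ∀ n, n ∈ K → m ⊗ n ∈ L} and unit Î := {m | m ≤ I}. Then this forms an imploid: K ⊸ L ⊆ (J ⊸ K) ⊸ (J ⊸ L), Î ⊆ K ⊸ K, and Î ⊸ K ⊆ K, with ⊸ contravariant in the left and covariant in the right argument. -/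
/-! Each imploid law is the matching skew-monoid inequality read through downward closure: the
hypotheses put the larger product in a downward-closed set, which then contains the smaller one. -/

def DownClosed {M : Type*} [Preorder M] (K : Set M) : Prop :=
  ∀ ⦃a b : M⦄, b ∈ K → a ≤ b → a ∈ K

def limp {M : Type*} (mul : M → M → M) (K L : Set M) : Set M :=
  {m | ∀ n, n ∈ K → mul m n ∈ L}

section Imploid

variable {M : Type*} (mul : M → M → M)

theorem limp_subset_limp {K₁ K₂ L₁ L₂ : Set M} (hK : K₂ ⊆ K₁) (hL : L₁ ⊆ L₂) :
    limp mul K₁ L₁ ⊆ limp mul K₂ L₂ :=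
  fun _ hm n hn => hL (hm n (hK hn))

variable [Preorder M]

theorem limp_subset_limp_limp (hassoc : ∀ a b c : M, mul (mul a b) c ≤ mul a (mul b c))
    (J K : Set M) {L : Set M} (hL : DownClosed L) :
    limp mul K L ⊆ limp mul (limp mul J K) (limp mul J L) :=
  fun m hm n hn p hp => hL (hm (mul n p) (hn p hp)) (hassoc m n p)

theorem Iic_subset_limp_self {I : M} (hmul_left : ∀ ⦃a₁ a₂⦄ b, a₁ ≤ a₂ → mul a₁ b ≤ mul a₂ b)
    (hlunit : ∀ a : M, mul I a ≤ a) {K : Set M} (hK : DownClosed K) :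
    {m | m ≤ I} ⊆ limp mul K K :=
  fun _ hm n hn => hK hn ((hmul_left n hm).trans (hlunit n))

theorem limp_Iic_subset {I : M} (hrunit : ∀ a : M, a ≤ mul a I) {K : Set M} (hK : DownClosed K) :
    limp mul {m | m ≤ I} K ⊆ K :=
  fun m hm => hK (hm I le_rfl) (hrunit m)

end Imploid

theorem stmt7 {M : Type*} [Preorder M] (mul : M → M → M) (I : M)
    (hmul : ∀ ⦃a₁ a₂ b₁ b₂ : M⦄, a₁ ≤ a₂ → b₁ ≤ b₂ → mul a₁ b₁ ≤ mul a₂ b₂)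
    (hassoc : ∀ a b c : M, mul (mul a b) c ≤ mul a (mul b c))
    (hlunit : ∀ a : M, mul I a ≤ a)
    (hrunit : ∀ a : M, a ≤ mul a I) :
    (∀ J K L : Set M, DownClosed J → DownClosed K → DownClosed L →
      limp mul K L ⊆ limp mul (limp mul J K) (limp mul J L)) ∧
    (∀ K : Set M, DownClosed K → {m | m ≤ I} ⊆ limp mul K K) ∧
    (∀ K : Set M, DownClosed K → limp mul {m | m ≤ I} K ⊆ K) ∧
    (∀ K₁ K₂ L₁ L₂ : Set M, K₂ ⊆ K₁ → L₁ ⊆ L₂ →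
      limp mul K₁ L₁ ⊆ limp mul K₂ L₂) :=
  ⟨fun J K _ _ _ hL => limp_subset_limp_limp mul hassoc J K hL,
    fun _ hK => Iic_subset_limp_self mul (fun _ _ _ ha => hmul ha le_rfl) hlunit hK,
    fun _ hK => limp_Iic_subset mul hrunit hK,
    fun _ _ _ _ hK hL => limp_subset_limp mul hK hL⟩
end

section
/- Let P be an imploid and R ⊆ P an upset. The following are equivalent: (1) R is dni-closed, i.e., a ∈ R implies ((a ⊸ b) ⊸ b) ∈ R for all b; (2) R satisfies both: a ∈ R implies (I ⊸ a) ∈ R, and (a ⊸ b) ∈ R implies ((b ⊸ c) ⊸ (a ⊸ c)) ∈ R for all c. -/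
def DniClosed {P : Type*} (imp : P → P → P) (R : Set P) : Prop :=
  ∀ a b : P, a ∈ R → imp (imp a b) b ∈ R

section DniClosed

variable {P : Type*} [Preorder P] {imp : P → P → P} {R : Set P}

theorem DniClosed.imp_unit_mem (hanti : ∀ b : P, Antitone (imp · b)) {I : P}
    (hid : ∀ a : P, I ≤ imp a a) (hR : UpClosed R) (hdni : DniClosed imp R)
    {a : P} (ha : a ∈ R) : imp I a ∈ R :=
  hR (hdni a a ha) (hanti a (hid a))

-- Apply dni-closure to `a ⊸ b` with target `a ⊸ c`; (comp) lets the premise shrink to `b ⊸ c`.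
theorem DniClosed.imp_prefix_mem (hanti : ∀ b : P, Antitone (imp · b))
    (hcomp : ∀ a b c : P, imp b c ≤ imp (imp a b) (imp a c)) (hR : UpClosed R)
    (hdni : DniClosed imp R) {a b : P} (hab : imp a b ∈ R) (c : P) :
    imp (imp b c) (imp a c) ∈ R :=
  hR (hdni (imp a b) (imp a c) hab) (hanti _ (hcomp a b c))

-- Prefixing `I ⊸ a ∈ R` by `a ⊸ b` gives `(a ⊸ b) ⊸ (I ⊸ b) ∈ R`, and (unit) strips the `I`.
theorem dniClosed_of_imp_unit_mem_of_imp_prefix_mem (hmono : ∀ a : P, Monotone (imp a))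
    {I : P} (hunit : ∀ a : P, imp I a ≤ a) (hR : UpClosed R)
    (hI : ∀ a : P, a ∈ R → imp I a ∈ R)
    (hprefix : ∀ a b : P, imp a b ∈ R → ∀ c : P, imp (imp b c) (imp a c) ∈ R) :
    DniClosed imp R :=
  fun a b ha => hR (hprefix I a (hI a ha) b) (hmono _ (hunit b))

end DniClosed

theorem stmt9 {P : Type*} [Preorder P] (imp : P → P → P) (I : P)
    (himp : ∀ ⦃a₁ a₂ b₁ b₂ : P⦄, a₂ ≤ a₁ → b₁ ≤ b₂ → imp a₁ b₁ ≤ imp a₂ b₂)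
    (hcomp : ∀ a b c : P, imp b c ≤ imp (imp a b) (imp a c))
    (hid : ∀ a : P, I ≤ imp a a)
    (hunit : ∀ a : P, imp I a ≤ a)
    (R : Set P) (hR : UpClosed R) :
    (∀ a b : P, a ∈ R → imp (imp a b) b ∈ R) ↔
    ((∀ a : P, a ∈ R → imp I a ∈ R) ∧
     (∀ a b : P, imp a b ∈ R → ∀ c : P, imp (imp b c) (imp a c) ∈ R)) := by
  have hanti : ∀ b : P, Antitone (imp · b) := fun _ _ _ h => himp h le_rfl
  have hmono : ∀ a : P, Monotone (imp a) := fun _ _ _ h => himp le_rfl h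
  refine ⟨fun hdni => ⟨fun a => DniClosed.imp_unit_mem hanti hid hR hdni, ?_⟩, ?_⟩
  · exact fun a b => DniClosed.imp_prefix_mem hanti hcomp hR hdni
  · rintro ⟨hI, hprefix⟩
    exact dniClosed_of_imp_unit_mem_of_imp_prefix_mem hmono hunit hR hI hprefix
end

section
/- Let P be an imploid and R ⊆ P an upset. R is dni-closed (a ∈ R implies ((a ⊸ b) ⊸ b) ∈ R for all b) if and only if R ⊗ S ⊇ S ⊗ R for all upsets S of P, where R ⊗ S := {p | ∃ q, (q ⊸ p) ∈ R ∧ q ∈ S}. -/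
theorem upClosed_Ici_s10 {P : Type*} [Preorder P] (x : P) : UpClosed (Set.Ici x) :=
  fun _ _ ha hab => le_trans ha hab

theorem tensor_comm_subset_of_dni {P : Type*} (imp : P → P → P) (R S : Set P)
    (hdni : ∀ a b : P, a ∈ R → imp (imp a b) b ∈ R) :
    tensor imp S R ⊆ tensor imp R S := by
  rintro p ⟨q, hqp, hq⟩
  exact ⟨imp q p, hdni q p hq, hqp⟩

theorem dni_mem_of_tensor_Ici_subset {P : Type*} [Preorder P] (imp : P → P → P)
    (himp : ∀ ⦃a₁ a₂ : P⦄ (b : P), a₂ ≤ a₁ → imp a₁ b ≤ imp a₂ b)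
    {R : Set P} (hR : UpClosed R) {a b : P} (ha : a ∈ R)
    (h : tensor imp (Set.Ici (imp a b)) R ⊆ tensor imp R (Set.Ici (imp a b))) :
    imp (imp a b) b ∈ R := by
  obtain ⟨q, hqb, hq⟩ := h ⟨a, le_rfl, ha⟩
  exact hR hqb (himp b hq)

theorem stmt10_general {P : Type*} [Preorder P] (imp : P → P → P)
    (himp : ∀ ⦃a₁ a₂ b₁ b₂ : P⦄, a₂ ≤ a₁ → b₁ ≤ b₂ → imp a₁ b₁ ≤ imp a₂ b₂)
    (R : Set P) (hR : UpClosed R) :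
    (∀ a b : P, a ∈ R → imp (imp a b) b ∈ R) ↔
    (∀ S : Set P, UpClosed S → tensor imp S R ⊆ tensor imp R S) :=
  ⟨fun hdni S _ => tensor_comm_subset_of_dni imp R S hdni,
    fun h _ _ ha => dni_mem_of_tensor_Ici_subset imp (fun _ _ _ h₁ => himp h₁ le_rfl) hR ha
      (h _ (upClosed_Ici_s10 _))⟩

theorem stmt10 {P : Type*} [Preorder P] (imp : P → P → P) (I : P)
    (himp : ∀ ⦃a₁ a₂ b₁ b₂ : P⦄, a₂ ≤ a₁ → b₁ ≤ b₂ → imp a₁ b₁ ≤ imp a₂ b₂)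
    (hcomp : ∀ a b c : P, imp b c ≤ imp (imp a b) (imp a c))
    (hid : ∀ a : P, I ≤ imp a a)
    (hunit : ∀ a : P, imp I a ≤ a)
    (R : Set P) (hR : UpClosed R) :
    (∀ a b : P, a ∈ R → imp (imp a b) b ∈ R) ↔
    (∀ S : Set P, UpClosed S → tensor imp S R ⊆ tensor imp R S) :=
  stmt10_general imp himp R hR
end

section
/- Let P be an imploid and R ⊆ P a deductively closed and dni-closed upset. Then P equipped with the induced relation a ≤_R b := (a ⊸ b) ∈ R, the same implication operation, and the same unit is a left normal imploid. In particular, ≤_R satisfies: a₂ ≤_R a₁ and b₁ ≤_R b₂ imply (a₁ ⊸ b₁) ≤_R (a₂ ⊸ b₂); and I ≤_R (a ⊸ b) implies a ≤_R b. -/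
section

variable {P : Type*} [Preorder P] {imp : P → P → P} {I : P} {R : Set P}

theorem imp_mem_of_le (hmono : ∀ a, Monotone (imp a)) (hid : ∀ a : P, I ≤ imp a a)
    (hR : UpClosed R) (hRI : I ∈ R) {a b : P} (hab : a ≤ b) : imp a b ∈ R :=
  hR hRI ((hid a).trans (hmono a hab))

theorem imp_mem_trans (hcomp : ∀ a b c : P, imp b c ≤ imp (imp a b) (imp a c))
    (hR : UpClosed R) (hded : ∀ a b : P, a ∈ R → imp a b ∈ R → b ∈ R) {a b c : P}
    (hab : imp a b ∈ R) (hbc : imp b c ∈ R) : imp a c ∈ R :=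
  hded _ _ hab (hR hbc (hcomp a b c))

theorem imp_imp_mem_of_imp_mem_right (hcomp : ∀ a b c : P, imp b c ≤ imp (imp a b) (imp a c))
    (hR : UpClosed R) (a : P) {b₁ b₂ : P} (hb : imp b₁ b₂ ∈ R) :
    imp (imp a b₁) (imp a b₂) ∈ R :=
  hR hb (hcomp a b₁ b₂)

theorem imp_imp_mem_of_imp_mem_left (hanti : ∀ b, Antitone (fun a : P => imp a b))
    (hcomp : ∀ a b c : P, imp b c ≤ imp (imp a b) (imp a c)) (hR : UpClosed R)
    (hdni : ∀ a b : P, a ∈ R → imp (imp a b) b ∈ R) {a₁ a₂ : P} (b : P)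
    (ha : imp a₂ a₁ ∈ R) : imp (imp a₁ b) (imp a₂ b) ∈ R :=
  hR (hdni _ (imp a₂ b) ha) (hanti _ (hcomp a₂ a₁ b))

theorem mem_of_imp_unit_mem (hunit : ∀ a : P, imp I a ≤ a) (hR : UpClosed R) {a : P}
    (ha : imp I a ∈ R) : a ∈ R :=
  hR ha (hunit a)

end

theorem stmt11 {P : Type*} [Preorder P] (imp : P → P → P) (I : P)
    (himp : ∀ ⦃a₁ a₂ b₁ b₂ : P⦄, a₂ ≤ a₁ → b₁ ≤ b₂ → imp a₁ b₁ ≤ imp a₂ b₂)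
    (hcomp : ∀ a b c : P, imp b c ≤ imp (imp a b) (imp a c))
    (hid : ∀ a : P, I ≤ imp a a)
    (hunit : ∀ a : P, imp I a ≤ a)
    (R : Set P) (hR : UpClosed R) (hRI : I ∈ R)
    (hded : ∀ a b : P, a ∈ R → imp a b ∈ R → b ∈ R)
    (hdni : ∀ a b : P, a ∈ R → imp (imp a b) b ∈ R) :
    (∀ a : P, imp a a ∈ R) ∧
    (∀ a b c : P, imp a b ∈ R → imp b c ∈ R → imp a c ∈ R) ∧
    (∀ a₁ a₂ b₁ b₂ : P, imp a₂ a₁ ∈ R → imp b₁ b₂ ∈ R →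
      imp (imp a₁ b₁) (imp a₂ b₂) ∈ R) ∧
    (∀ a b c : P, imp (imp b c) (imp (imp a b) (imp a c)) ∈ R) ∧
    (∀ a : P, imp I (imp a a) ∈ R) ∧
    (∀ a : P, imp (imp I a) a ∈ R) ∧
    (∀ a b : P, imp I (imp a b) ∈ R → imp a b ∈ R) := by
  have hmono : ∀ a, Monotone (imp a) := fun _ _ _ h => himp le_rfl h
  have hanti : ∀ b, Antitone (fun a => imp a b) := fun _ _ _ h => himp h le_rfl
  have hle : ∀ {a b : P}, a ≤ b → imp a b ∈ R := imp_mem_of_le hmono hid hR hRI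
  have htrans : ∀ a b c : P, imp a b ∈ R → imp b c ∈ R → imp a c ∈ R :=
    fun _ _ _ => imp_mem_trans hcomp hR hded
  refine ⟨fun a => hle le_rfl, htrans, ?_, fun a b c => hle (hcomp a b c),
    fun a => hle (hid a), fun a => hle (hunit a), fun a b => mem_of_imp_unit_mem hunit hR⟩
  intro a₁ a₂ b₁ b₂ ha hb
  exact htrans _ _ _ (imp_imp_mem_of_imp_mem_right hcomp hR a₁ hb)
    (imp_imp_mem_of_imp_mem_left hanti hcomp hR hdni b₂ ha)
end

section
/- Let f : P → Q be a lax homomorphism of imploids. Then the kernel ker f := f⁻¹({b | I_Q ≤ b}) is a deductively closed upset of P. If moreover f is strong, then ker f is dni-closed. -/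
/-! Everything rests on modus ponens in `Q`: if `I ≤ x` then `x ⊸ y ≤ I ⊸ y ≤ y`.
Pulled back along the lax map it closes the kernel under detachment; for a strong map,
`I ≤ (fa ⊸ fb) ⊸ (fa ⊸ fb) ≤ (fa ⊸ fb) ⊸ fb ≡ f((a ⊸ b) ⊸ b)` for `a` in the kernel. -/

section Imploid

variable {Q : Type*} [Preorder Q] {impQ : Q → Q → Q} {IQ : Q}

theorem imp_le_of_unit_le
    (himp : ∀ ⦃a₁ a₂ b₁ b₂ : Q⦄, a₂ ≤ a₁ → b₁ ≤ b₂ → impQ a₁ b₁ ≤ impQ a₂ b₂)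
    (hunit : ∀ a : Q, impQ IQ a ≤ a) {x : Q} (hx : IQ ≤ x) (y : Q) :
    impQ x y ≤ y :=
  (himp hx le_rfl).trans (hunit y)

theorem unit_le_imp_imp_of_unit_le
    (himp : ∀ ⦃a₁ a₂ b₁ b₂ : Q⦄, a₂ ≤ a₁ → b₁ ≤ b₂ → impQ a₁ b₁ ≤ impQ a₂ b₂)
    (hid : ∀ a : Q, IQ ≤ impQ a a) (hunit : ∀ a : Q, impQ IQ a ≤ a)
    {x : Q} (hx : IQ ≤ x) (y : Q) :
    IQ ≤ impQ (impQ x y) y :=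
  (hid _).trans (himp le_rfl (imp_le_of_unit_le himp hunit hx y))

end Imploid

section Kernel

variable {P Q : Type*} [Preorder Q] {impP : P → P → P}
  {impQ : Q → Q → Q} {IQ : Q} {f : P → Q}

theorem upClosed_preimage_setOf_le [Preorder P] (hf : Monotone f) (c : Q) :
    UpClosed (f ⁻¹' {b | c ≤ b}) :=
  fun _ _ ha hab => le_trans ha (hf hab)

theorem mem_ker_of_mem_ker_of_imp_mem_ker
    (himpQ : ∀ ⦃a₁ a₂ b₁ b₂ : Q⦄, a₂ ≤ a₁ → b₁ ≤ b₂ → impQ a₁ b₁ ≤ impQ a₂ b₂)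
    (hunitQ : ∀ a : Q, impQ IQ a ≤ a)
    (hlaximp : ∀ a b : P, f (impP a b) ≤ impQ (f a) (f b))
    {a b : P} (ha : a ∈ f ⁻¹' {b | IQ ≤ b}) (hab : impP a b ∈ f ⁻¹' {b | IQ ≤ b}) :
    b ∈ f ⁻¹' {b | IQ ≤ b} :=
  calc IQ ≤ f (impP a b) := hab
    _ ≤ impQ (f a) (f b) := hlaximp a b
    _ ≤ f b := imp_le_of_unit_le himpQ hunitQ ha _

theorem imp_imp_mem_ker_of_mem_ker
    (himpQ : ∀ ⦃a₁ a₂ b₁ b₂ : Q⦄, a₂ ≤ a₁ → b₁ ≤ b₂ → impQ a₁ b₁ ≤ impQ a₂ b₂)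
    (hidQ : ∀ a : Q, IQ ≤ impQ a a) (hunitQ : ∀ a : Q, impQ IQ a ≤ a)
    (hlaximp : ∀ a b : P, f (impP a b) ≤ impQ (f a) (f b))
    (hoplaximp : ∀ a b : P, impQ (f a) (f b) ≤ f (impP a b))
    {a : P} (ha : a ∈ f ⁻¹' {b | IQ ≤ b}) (b : P) :
    impP (impP a b) b ∈ f ⁻¹' {b | IQ ≤ b} :=
  calc IQ ≤ impQ (impQ (f a) (f b)) (f b) :=
        unit_le_imp_imp_of_unit_le himpQ hidQ hunitQ ha _
    _ ≤ impQ (f (impP a b)) (f b) := himpQ (hlaximp a b) le_rfl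
    _ ≤ f (impP (impP a b) b) := hoplaximp _ _

end Kernel

theorem stmt13_general {P Q : Type*} [Preorder P] [Preorder Q]
    (impP : P → P → P) (IP : P) (impQ : Q → Q → Q) (IQ : Q)
    (himpQ : ∀ ⦃a₁ a₂ b₁ b₂ : Q⦄, a₂ ≤ a₁ → b₁ ≤ b₂ → impQ a₁ b₁ ≤ impQ a₂ b₂)
    (hidQ : ∀ a : Q, IQ ≤ impQ a a)
    (hunitQ : ∀ a : Q, impQ IQ a ≤ a)
    (f : P → Q) (hmono : Monotone f)
    (hlaxI : IQ ≤ f IP)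
    (hlaximp : ∀ a b : P, f (impP a b) ≤ impQ (f a) (f b)) :
    (UpClosed (f ⁻¹' {b | IQ ≤ b}) ∧
     IP ∈ f ⁻¹' {b | IQ ≤ b} ∧
     (∀ a b : P, a ∈ f ⁻¹' {b | IQ ≤ b} → impP a b ∈ f ⁻¹' {b | IQ ≤ b} →
       b ∈ f ⁻¹' {b | IQ ≤ b})) ∧
    ((f IP ≤ IQ) → (∀ a b : P, impQ (f a) (f b) ≤ f (impP a b)) →
      ∀ a b : P, a ∈ f ⁻¹' {b | IQ ≤ b} →
        impP (impP a b) b ∈ f ⁻¹' {b | IQ ≤ b}) :=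
  ⟨⟨upClosed_preimage_setOf_le hmono IQ, hlaxI,
      fun _ _ => mem_ker_of_mem_ker_of_imp_mem_ker himpQ hunitQ hlaximp⟩,
    fun _ hstrong _ b ha => imp_imp_mem_ker_of_mem_ker himpQ hidQ hunitQ hlaximp hstrong ha b⟩

theorem stmt13 {P Q : Type*} [Preorder P] [Preorder Q]
    (impP : P → P → P) (IP : P) (impQ : Q → Q → Q) (IQ : Q)
    (himpP : ∀ ⦃a₁ a₂ b₁ b₂ : P⦄, a₂ ≤ a₁ → b₁ ≤ b₂ → impP a₁ b₁ ≤ impP a₂ b₂)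
    (hcompP : ∀ a b c : P, impP b c ≤ impP (impP a b) (impP a c))
    (hidP : ∀ a : P, IP ≤ impP a a)
    (hunitP : ∀ a : P, impP IP a ≤ a)
    (himpQ : ∀ ⦃a₁ a₂ b₁ b₂ : Q⦄, a₂ ≤ a₁ → b₁ ≤ b₂ → impQ a₁ b₁ ≤ impQ a₂ b₂)
    (hcompQ : ∀ a b c : Q, impQ b c ≤ impQ (impQ a b) (impQ a c))
    (hidQ : ∀ a : Q, IQ ≤ impQ a a)
    (hunitQ : ∀ a : Q, impQ IQ a ≤ a)
    (f : P → Q) (hmono : Monotone f)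
    (hlaxI : IQ ≤ f IP)
    (hlaximp : ∀ a b : P, f (impP a b) ≤ impQ (f a) (f b)) :
    (UpClosed (f ⁻¹' {b | IQ ≤ b}) ∧
     IP ∈ f ⁻¹' {b | IQ ≤ b} ∧
     (∀ a b : P, a ∈ f ⁻¹' {b | IQ ≤ b} → impP a b ∈ f ⁻¹' {b | IQ ≤ b} →
       b ∈ f ⁻¹' {b | IQ ≤ b})) ∧
    ((f IP ≤ IQ) → (∀ a b : P, impQ (f a) (f b) ≤ f (impP a b)) →
      ∀ a b : P, a ∈ f ⁻¹' {b | IQ ≤ b} →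
        impP (impP a b) b ∈ f ⁻¹' {b | IQ ≤ b}) :=
  stmt13_general impP IP impQ IQ himpQ hidQ hunitQ f hmono hlaxI hlaximp
end

section
/- Let P be a symmetric left normal imploid. If a typing judgment x₁:a₁, ..., xₙ:aₙ ⊢ T : b is derivable for a linear lambda term T (using the rules: variable x:a ⊢ x:a; application with side condition c ≤ a ⊸ b; abstraction with side condition a ⊸ b ≤ c; and exchange of adjacent context entries), then I ≤ a₁ ⊸ (a₂ ⊸ (... ⊸ (aₙ ⊸ b)...)). -/
inductive Term : Type
  | var : ℕ → Term
  | app : Term → Term → Term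
  | abs : ℕ → Term → Term

inductive Deriv {P : Type*} [Preorder P] (imp : P → P → P) :
    List (ℕ × P) → Term → P → Prop
  | var (x : ℕ) (a : P) : Deriv imp [(x, a)] (Term.var x) a
  | app {Γ Δ : List (ℕ × P)} {T₁ T₂ : Term} {a b c : P} :
      Deriv imp Γ T₁ c → Deriv imp Δ T₂ a → c ≤ imp a b →
      Deriv imp (Γ ++ Δ) (Term.app T₁ T₂) b
  | abs {Γ : List (ℕ × P)} {T₁ : Term} {x : ℕ} {a b c : P} :
      Deriv imp (Γ ++ [(x, a)]) T₁ b → imp a b ≤ c →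
      Deriv imp Γ (Term.abs x T₁) c
  | exch {Γ Δ : List (ℕ × P)} {T : Term} {x y : ℕ} {a b c : P} :
      Deriv imp (Γ ++ (y, b) :: (x, a) :: Δ) T c →
      Deriv imp (Γ ++ (x, a) :: (y, b) :: Δ) T c

/-!
Write `l ⊸* b` for `l.foldr imp b`, so that `[a₁, …, aₙ] ⊸* b = a₁ ⊸ (⋯ ⊸ (aₙ ⊸ b))`, and
induct on the derivation. By (comp), folding a context onto both sides is functorial:
`a ⊸ b ≤ (l ⊸* a) ⊸ (l ⊸* b)`; with (unit), a proof `I ≤ l ⊸* a` of the argument therefore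
turns `a ⊸ b` into `l ⊸* b`, which is the application case. Abstraction and exchange only change
the innermost conclusion, by the side condition and by symmetry respectively.
-/

section Imploid

variable {P : Type*} [Preorder P] {imp : P → P → P}

theorem foldr_imp_mono
    (himp : ∀ ⦃a₁ a₂ b₁ b₂ : P⦄, a₂ ≤ a₁ → b₁ ≤ b₂ → imp a₁ b₁ ≤ imp a₂ b₂)
    (l : List P) {b b' : P} (h : b ≤ b') : l.foldr imp b ≤ l.foldr imp b' := by
  induction l with
  | nil => exact h
  | cons d l ih => exact himp le_rfl ih

theorem imp_le_imp_foldr_imp (hcomp : ∀ a b c : P, imp b c ≤ imp (imp a b) (imp a c))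
    (l : List P) (a b : P) : imp a b ≤ imp (l.foldr imp a) (l.foldr imp b) := by
  induction l with
  | nil => exact le_rfl
  | cons d l ih => exact ih.trans (hcomp d _ _)

theorem imp_le_foldr_imp_of_le_foldr_imp {I : P}
    (himp : ∀ ⦃a₁ a₂ b₁ b₂ : P⦄, a₂ ≤ a₁ → b₁ ≤ b₂ → imp a₁ b₁ ≤ imp a₂ b₂)
    (hcomp : ∀ a b c : P, imp b c ≤ imp (imp a b) (imp a c))
    (hunit : ∀ a : P, imp I a ≤ a)
    {l : List P} {a : P} (ha : I ≤ l.foldr imp a) (b : P) :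
    imp a b ≤ l.foldr imp b :=
  calc imp a b ≤ imp (l.foldr imp a) (l.foldr imp b) := imp_le_imp_foldr_imp hcomp l a b
    _ ≤ imp I (l.foldr imp b) := himp ha le_rfl
    _ ≤ l.foldr imp b := hunit _

end Imploid

theorem stmt16_general {P : Type*} [Preorder P] (imp : P → P → P) (I : P)
    (himp : ∀ ⦃a₁ a₂ b₁ b₂ : P⦄, a₂ ≤ a₁ → b₁ ≤ b₂ → imp a₁ b₁ ≤ imp a₂ b₂)
    (hcomp : ∀ a b c : P, imp b c ≤ imp (imp a b) (imp a c))
    (hid : ∀ a : P, I ≤ imp a a)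
    (hunit : ∀ a : P, imp I a ≤ a)
    (hexch : ∀ a b c : P, imp a (imp b c) ≤ imp b (imp a c))
    (Γ : List (ℕ × P)) (T : Term) (b : P)
    (h : Deriv imp Γ T b) :
    I ≤ (Γ.map Prod.snd).foldr imp b := by
  induction h with
  | var _ a => exact hid a
  | @app Γ Δ _ _ a b c _ _ hc ihFun ihArg =>
    have hcΔ : c ≤ (Δ.map Prod.snd).foldr imp b :=
      hc.trans (imp_le_foldr_imp_of_le_foldr_imp himp hcomp hunit ihArg b)
    rw [List.map_append, List.foldr_append]
    exact ihFun.trans (foldr_imp_mono himp _ hcΔ)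
  | abs _ hab ih =>
    rw [List.map_append, List.foldr_append] at ih
    exact ih.trans (foldr_imp_mono himp _ hab)
  | exch _ ih =>
    simp only [List.map_append, List.foldr_append, List.map_cons, List.foldr_cons] at ih ⊢
    exact ih.trans (foldr_imp_mono himp _ (hexch _ _ _))

theorem stmt16 {P : Type*} [Preorder P] (imp : P → P → P) (I : P)
    (himp : ∀ ⦃a₁ a₂ b₁ b₂ : P⦄, a₂ ≤ a₁ → b₁ ≤ b₂ → imp a₁ b₁ ≤ imp a₂ b₂)
    (hcomp : ∀ a b c : P, imp b c ≤ imp (imp a b) (imp a c))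
    (hid : ∀ a : P, I ≤ imp a a)
    (hunit : ∀ a : P, imp I a ≤ a)
    (hln : ∀ a b : P, I ≤ imp a b → a ≤ b)
    (hexch : ∀ a b c : P, imp a (imp b c) ≤ imp b (imp a c))
    (Γ : List (ℕ × P)) (T : Term) (b : P)
    (h : Deriv imp Γ T b) :
    I ≤ (Γ.map Prod.snd).foldr imp b :=
  stmt16_general imp I himp hcomp hid hunit hexch Γ T b h
end

section
/- Let P be an imploid in which every upset of the form considered is closed under the operations below. For upsets R, S of P with the product R ⊗ S := {p | ∃ q, (q ⊸ p) ∈ R ∧ q ∈ S}: if R and S are both dni-closed (a ∈ R implies ((a ⊸ b) ⊸ b) ∈ R for all b, and similarly for S), then R ⊗ S is dni-closed. -/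
section Strength

variable {P : Type*} [Preorder P] {imp : P → P → P}
  (himp : ∀ ⦃a₁ a₂ b₁ b₂ : P⦄, a₂ ≤ a₁ → b₁ ≤ b₂ → imp a₁ b₁ ≤ imp a₂ b₂)
  (hcomp : ∀ a b c : P, imp b c ≤ imp (imp a b) (imp a c))
include himp hcomp

theorem imp_imp_le_imp_imp_imp (q a b : P) :
    imp (imp q b) b ≤ imp (imp a b) (imp (imp q a) b) :=
  (hcomp (imp q a) (imp q b) b).trans (himp (hcomp q a b) le_rfl)

theorem imp_imp_imp_le_imp_imp_imp_imp (q a b : P) :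
    imp (imp (imp q a) b) b ≤ imp (imp (imp q b) b) (imp (imp a b) b) :=
  (hcomp (imp a b) (imp (imp q a) b) b).trans
    (himp (imp_imp_le_imp_imp_imp himp hcomp q a b) le_rfl)

theorem DniClosed.tensor {R S : Set P} (hR : UpClosed R) (hRdni : DniClosed imp R)
    (hSdni : DniClosed imp S) : DniClosed imp (tensor imp R S) := by
  rintro a b ⟨q, hqa, hq⟩
  exact ⟨imp (imp q b) b,
    hR (hRdni _ b hqa) (imp_imp_imp_le_imp_imp_imp_imp himp hcomp q a b), hSdni q b hq⟩

end Strength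

theorem stmt19_general {P : Type*} [Preorder P] (imp : P → P → P)
    (himp : ∀ ⦃a₁ a₂ b₁ b₂ : P⦄, a₂ ≤ a₁ → b₁ ≤ b₂ → imp a₁ b₁ ≤ imp a₂ b₂)
    (hcomp : ∀ a b c : P, imp b c ≤ imp (imp a b) (imp a c))
    (R S : Set P) (hR : UpClosed R)
    (hRdni : ∀ a b : P, a ∈ R → imp (imp a b) b ∈ R)
    (hSdni : ∀ a b : P, a ∈ S → imp (imp a b) b ∈ S) :
    ∀ a b : P, a ∈ tensor imp R S → imp (imp a b) b ∈ tensor imp R S :=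
  DniClosed.tensor himp hcomp hR hRdni hSdni

theorem stmt19 {P : Type*} [Preorder P] (imp : P → P → P) (I : P)
    (himp : ∀ ⦃a₁ a₂ b₁ b₂ : P⦄, a₂ ≤ a₁ → b₁ ≤ b₂ → imp a₁ b₁ ≤ imp a₂ b₂)
    (hcomp : ∀ a b c : P, imp b c ≤ imp (imp a b) (imp a c))
    (hid : ∀ a : P, I ≤ imp a a)
    (hunit : ∀ a : P, imp I a ≤ a)
    (R S : Set P) (hR : UpClosed R) (hS : UpClosed S)
    (hRdni : ∀ a b : P, a ∈ R → imp (imp a b) b ∈ R)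
    (hSdni : ∀ a b : P, a ∈ S → imp (imp a b) b ∈ S) :
    ∀ a b : P, a ∈ tensor imp R S → imp (imp a b) b ∈ tensor imp R S :=
  stmt19_general imp himp hcomp R S hR hRdni hSdni
end
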